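/- arXiv:1203.6198 — 2 statements merged into one kernel-verified Lean document; each statement's English description precedes it below -/
import Mathlib

section
/- Let (F, θ) be a field equipped with a higher derivation, and let L/F be a finitely generated separable field extension with separating transcendence basis x_1, …, x_k (i.e. x_1, …, x_k are algebraically independent over F and L is a finite separable extension of F(x_1, …, x_k)). Then for any choice of elements ξ_{i,n} ∈ L (for i = 1, …, k and n ≥ 1) there exists a unique higher derivation θ_L : L → L[[T]] extending θ (i.e. θ_L(a) equals the image of θ(a) in L[[T]] for all a ∈ F) and satisfying θ_L(x_i) = x_i + Σ_{n=1}^∞ ξ_{i,n} T^n for all i = 1, …, k. -/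
/-!
Over the purely transcendental field `K = F(x₁, …, x_k)` there is no choice: `θ` and the
prescribed series for the `xᵢ` define a ring map `F[x₁, …, x_k] → L⟦T⟧` under which every nonzero
polynomial has a unit constant term, so it extends uniquely to `K`. A separable algebraic
extension `L/K` is formally étale and `L⟦T⟧` is `T`-adically complete with `L⟦T⟧/(T) = L`,
so the map sending `a ∈ L` to the class of the constant series `a` lifts uniquely to a
`K`-algebra map `L → L⟦T⟧`; being a lift of it is exactly the higher derivation condition.
-/

open PowerSeries

def IsHigherDerivation {R : Type*} [CommRing R] (θ : R →+* PowerSeries R) : Prop :=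
  ∀ r : R, PowerSeries.constantCoeff (R := R) (θ r) = r

theorem Algebra.FormallyEtale.existsUnique_mkₐ_comp_eq_of_isAdicComplete
    {R A S : Type*} [CommRing R] [CommRing A] [Algebra R A] [CommRing S] [Algebra R S]
    [Algebra.FormallyEtale R A] {I : Ideal S} [IsAdicComplete I S] (f : A →ₐ[R] S ⧸ I) :
    ∃! g : A →ₐ[R] S, (Ideal.Quotient.mkₐ R I).comp g = f := by
  obtain ⟨g, hg⟩ := Algebra.FormallySmooth.exists_mkₐ_comp_eq_of_isAdicComplete f
  refine ⟨g, hg, fun g' hg' => Algebra.FormallyUnramified.ext_of_iInf I ?_ fun a => ?_⟩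
  · simpa using (IsAdicComplete.toIsHausdorff (I := I) (M := S)).iInf_pow_smul
  · exact (AlgHom.congr_fun hg' a).trans (AlgHom.congr_fun hg a).symm

theorem IntermediateField.adjoin_ringHom_ext {F E B : Type*} [Field F] [Field E] [Algebra F E]
    [CommSemiring B] {s : Set E} {φ₁ φ₂ : adjoin F s →+* B}
    (hF : ∀ a, φ₁ (algebraMap F _ a) = φ₂ (algebraMap F _ a))
    (hs : ∀ x (hx : x ∈ s), φ₁ ⟨x, subset_adjoin F s hx⟩ = φ₂ ⟨x, subset_adjoin F s hx⟩) :
    φ₁ = φ₂ := by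
  let : Algebra F B := (φ₂.comp (algebraMap F _)).toAlgebra
  have := adjoin_algHom_ext F (φ₁ := { φ₁ with commutes' := hF })
    (φ₂ := { φ₂ with commutes' := fun _ => rfl }) hs
  exact RingHom.ext (AlgHom.congr_fun this)

theorem PowerSeries.mk_span_X_eq_mk_iff {R : Type*} [CommRing R] {f g : R⟦X⟧} :
    Ideal.Quotient.mk (Ideal.span {X}) f = Ideal.Quotient.mk (Ideal.span {X}) g ↔
      constantCoeff f = constantCoeff g := by
  rw [Ideal.Quotient.eq, Ideal.mem_span_singleton, X_dvd_iff, map_sub, sub_eq_zero]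

theorem isHigherDerivation_iff_mk_span_X_comp {R : Type*} [CommRing R] (τ : R →+* R⟦X⟧) :
    IsHigherDerivation τ ↔
      (Ideal.Quotient.mk (Ideal.span {X})).comp τ =
        (Ideal.Quotient.mk (Ideal.span {X})).comp C := by
  simp only [IsHigherDerivation, RingHom.ext_iff, RingHom.comp_apply, mk_span_X_eq_mk_iff,
    constantCoeff_C]

theorem AlgebraicIndependent.exists_ringHom_adjoin_powerSeries {ι F L : Type*} [Field F]
    [Field L] [Algebra F L] {x : ι → L} (hx : AlgebraicIndependent F x) (φ : F →+* L⟦X⟧)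
    (hφ : ∀ a, constantCoeff (φ a) = algebraMap F L a) (s : ι → L⟦X⟧)
    (hs : ∀ i, constantCoeff (s i) = x i) :
    ∃ σ : IntermediateField.adjoin F (Set.range x) →+* L⟦X⟧,
      (∀ c, constantCoeff (σ c) = c) ∧ (∀ a, σ (algebraMap F _ a) = φ a) ∧
      ∀ i, σ ⟨x i, IntermediateField.subset_adjoin F _ (Set.mem_range_self i)⟩ = s i := by
  let ψ := MvPolynomial.eval₂Hom φ s
  have hψ : constantCoeff.comp ψ = (MvPolynomial.aeval x).toRingHom :=
    MvPolynomial.ringHom_ext (fun a => by simp [ψ, hφ]) (fun i => by simp [ψ, hs])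
  have hunit (q : nonZeroDivisors (MvPolynomial ι F)) : IsUnit (ψ q) := by
    rw [isUnit_iff_constantCoeff, ← RingHom.comp_apply, hψ]
    exact Ne.isUnit (mt (hx.eq_zero_of_aeval_eq_zero _) (nonZeroDivisors.coe_ne_zero q))
  let Θ : FractionRing (MvPolynomial ι F) →+* L⟦X⟧ := IsLocalization.lift hunit
  have hΘ : constantCoeff.comp Θ = (algebraMap _ L).comp hx.aevalEquivField.toRingHom :=
    IsLocalization.ringHom_ext (nonZeroDivisors (MvPolynomial ι F)) <| by
      rw [RingHom.comp_assoc, IsLocalization.lift_comp, hψ]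
      ext <;> simp
  refine ⟨Θ.comp hx.aevalEquivField.symm.toRingHom, fun c => ?_, fun a => ?_, fun i => ?_⟩
  · simpa using RingHom.congr_fun hΘ (hx.aevalEquivField.symm c)
  · have : hx.aevalEquivField.symm (algebraMap F _ a) =
        algebraMap (MvPolynomial ι F) _ (MvPolynomial.C a) := by
      rw [AlgEquiv.commutes, ← MvPolynomial.algebraMap_eq, ← IsScalarTower.algebraMap_apply]
    simp [Θ, this, ψ]
  · have : hx.aevalEquivField (algebraMap _ _ (MvPolynomial.X i)) =
        ⟨x i, IntermediateField.subset_adjoin F _ (Set.mem_range_self i)⟩ :=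
      Subtype.ext ((hx.aevalEquivField_algebraMap_apply_coe _).trans (MvPolynomial.aeval_X _ _))
    simp [Θ, ← this, ψ]

theorem existsUnique_isHigherDerivation_comp_algebraMap_eq {K L : Type*} [Field K] [Field L]
    [Algebra K L] [Algebra.IsSeparable K L] (σ : K →+* L⟦X⟧)
    (hσ : ∀ c, constantCoeff (σ c) = algebraMap K L c) :
    ∃! τ : L →+* L⟦X⟧, IsHigherDerivation τ ∧ τ.comp (algebraMap K L) = σ := by
  let := σ.toAlgebra
  have : Algebra.FormallyEtale K L := Algebra.FormallyEtale.of_isSeparable K L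
  let f : L →ₐ[K] L⟦X⟧ ⧸ Ideal.span {X} :=
    { (Ideal.Quotient.mk _).comp C with
      commutes' := fun c => mk_span_X_eq_mk_iff.2 ((constantCoeff_C _).trans (hσ c).symm) }
  obtain ⟨g, hg, huniq⟩ := Algebra.FormallyEtale.existsUnique_mkₐ_comp_eq_of_isAdicComplete f
  refine ⟨g, ⟨(isHigherDerivation_iff_mk_span_X_comp _).2 (congrArg AlgHom.toRingHom hg),
    RingHom.ext g.commutes⟩, fun τ ⟨hτ, hτσ⟩ => ?_⟩
  have := huniq { τ with commutes' := RingHom.congr_fun hτσ }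
    (AlgHom.coe_ringHom_injective ((isHigherDerivation_iff_mk_span_X_comp _).1 hτ))
  exact congrArg AlgHom.toRingHom this

theorem torsion_group_schemes_stmt_2_general {F L : Type*} [Field F] [Field L] [Algebra F L]
    (θ : F →+* PowerSeries F) (hθ : IsHigherDerivation θ)
    (k : ℕ) (x : Fin k → L) (hx : AlgebraicIndependent F x)
    (hsep : Algebra.IsSeparable (IntermediateField.adjoin F (Set.range x)) L)
    (ξ : Fin k → ℕ → L) :
    ∃! θL : L →+* PowerSeries L,
      IsHigherDerivation θL ∧
      (∀ a : F, θL (algebraMap F L a) = PowerSeries.map (algebraMap F L) (θ a)) ∧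
      (∀ i : Fin k,
        θL (x i) = PowerSeries.mk (fun n => if n = 0 then x i else ξ i n)) := by
  set K := IntermediateField.adjoin F (Set.range x)
  let s i := PowerSeries.mk (fun n => if n = 0 then x i else ξ i n)
  obtain ⟨σ, hσ, hσF, hσx⟩ := hx.exists_ringHom_adjoin_powerSeries
    ((PowerSeries.map (algebraMap F L)).comp θ)
    (fun a => by simp [← coeff_zero_eq_constantCoeff_apply, hθ a]) s (fun i => by simp [s])
  obtain ⟨τ, ⟨hτ, hτσ⟩, huniq⟩ := existsUnique_isHigherDerivation_comp_algebraMap_eq σ hσ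
  have hτK (c : K) : τ (algebraMap K L c) = σ c := RingHom.congr_fun hτσ c
  refine ⟨τ, ⟨hτ, fun a => ?_, fun i => (hτK _).trans (hσx i)⟩,
    fun τ' ⟨hτ', hτ'F, hτ'x⟩ => huniq τ' ⟨hτ', ?_⟩⟩
  · rw [IsScalarTower.algebraMap_apply F K L, hτK, hσF]
    rfl
  · refine IntermediateField.adjoin_ringHom_ext (fun a => ?_) ?_
    · rw [RingHom.comp_apply, ← IsScalarTower.algebraMap_apply, hτ'F, hσF]
      rfl
    · rintro _ ⟨i, rfl⟩
      exact (hτ'x i).trans (hσx i).symm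

/-- let `(F, θ)` be an HD-field and `L/F` a finitely generated separable
field extension with separating transcendence basis `x_1, …, x_k` (the `x_i` are
algebraically independent over `F`, and `L` is finite and separable over
`F(x_1, …, x_k)`).  Then for any choice of elements `ξ_{i,n} ∈ L` (`1 ≤ i ≤ k`,
`n ≥ 1`) there is a unique higher derivation `θ_L` on `L` extending `θ` and
satisfying `θ_L(x_i) = x_i + Σ_{n≥1} ξ_{i,n} T^n` for all `i`. -/
theorem torsion_group_schemes_stmt_2 {F L : Type*} [Field F] [Field L] [Algebra F L]
    (θ : F →+* PowerSeries F) (hθ : IsHigherDerivation θ)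
    (k : ℕ) (x : Fin k → L) (hx : AlgebraicIndependent F x)
    (hfin : FiniteDimensional (IntermediateField.adjoin F (Set.range x)) L)
    (hsep : Algebra.IsSeparable (IntermediateField.adjoin F (Set.range x)) L)
    (ξ : Fin k → ℕ → L) :
    ∃! θL : L →+* PowerSeries L,
      IsHigherDerivation θL ∧
      (∀ a : F, θL (algebraMap F L a) = PowerSeries.map (algebraMap F L) (θ a)) ∧
      (∀ i : Fin k,
        θL (x i) = PowerSeries.mk (fun n => if n = 0 then x i else ξ i n)) :=
  torsion_group_schemes_stmt_2_general θ hθ k x hx hsep ξ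
end

section
/- Let (L, θ) be a field of prime characteristic p equipped with a higher derivation, and let ℓ ∈ ℕ. Then the set of all elements x ∈ L such that θ^(i)(θ^(j)(x)) = binom(i+j, i)·θ^(i+j)(x) holds for all i, j ≥ 0 with i + j < p^ℓ is a subfield of L. (The same holds for the set of x for which these identities hold for all i, j ≥ 0 without restriction.) -/
/-- `hdCoeff θ n r = θ^(n)(r)`, the coefficient of `T^n` in `θ r`. -/
noncomputable def hdCoeff {R : Type*} [CommRing R] (θ : R →+* PowerSeries R) (n : ℕ) :
    R → R := fun r => PowerSeries.coeff (R := R) n (θ r)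

/-!
A higher derivation `θ` gives two ring homomorphisms `L → L⟦T⟧⟦S⟧`: `x ↦ Σ_j θ(θ^(j)(x)) S^j`,
whose coefficient of `T^i S^j` is `θ^(i)(θ^(j)(x))`, and `x ↦ θ(x)(T + S)`, whose coefficient of
`T^i S^j` is `binom(i+j, i) θ^(i+j)(x)`. Both sets are the sets of `x` at which these two
homomorphisms agree modulo an ideal: the ideal of series without terms of total degree `< p^ℓ`,
resp. the zero ideal. Agreement modulo an ideal is the equalizer of the two homomorphisms composed
with the quotient map, and an equalizer of ring homomorphisms out of a field is a subfield.
-/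

open PowerSeries

theorem RingHom.exists_subfield_coe_eq_setOf_sub_mem {K A : Type*} [Field K] [CommRing A]
    (f g : K →+* A) (I : Ideal A) : ∃ F : Subfield K, (F : Set K) = {x | f x - g x ∈ I} :=
  ⟨((Ideal.Quotient.mk I).comp f).eqLocusField ((Ideal.Quotient.mk I).comp g), by
    ext x
    simp [Ideal.Quotient.eq]⟩

namespace PowerSeries

section Semiring

variable (R : Type*) [Semiring R]

def highTotalDegreeIdeal (N : ℕ) : Ideal R⟦X⟧⟦X⟧ where
  carrier := {F | ∀ i j, i + j < N → coeff i (coeff j F) = 0}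
  zero_mem' := by simp
  add_mem' {F G} hF hG i j hij := by simp [hF i j hij, hG i j hij]
  smul_mem' G F hF i j hij := by
    rw [smul_eq_mul, coeff_mul, map_sum]
    refine Finset.sum_eq_zero fun q hq => ?_
    rw [coeff_mul]
    refine Finset.sum_eq_zero fun r hr => mul_eq_zero_of_right _ (hF r.2 q.2 ?_)
    rw [Finset.HasAntidiagonal.mem_antidiagonal] at hq hr
    omega

variable {R}

theorem mem_highTotalDegreeIdeal {N : ℕ} {F : R⟦X⟧⟦X⟧} :
    F ∈ highTotalDegreeIdeal R N ↔ ∀ i j, i + j < N → coeff i (coeff j F) = 0 :=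
  Iff.rfl

theorem eq_zero_iff_forall_coeff_coeff_eq_zero {F : R⟦X⟧⟦X⟧} :
    F = 0 ↔ ∀ i j, coeff i (coeff j F) = 0 := by
  simp only [PowerSeries.ext_iff, map_zero]
  exact forall_comm

end Semiring

section CommSemiring

variable {R : Type*} [CommSemiring R]

noncomputable def curryFinTwo : MvPowerSeries (Fin 2) R →+* R⟦X⟧⟦X⟧ :=
  (map (MvPowerSeries.rename (Equiv.ofUnique (Fin 1) Unit) :
    MvPowerSeries (Fin 1) R →ₐ[R] R⟦X⟧).toRingHom).comp (MvPowerSeries.finSuccEquiv R 1).toRingHom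

theorem coeff_coeff_curryFinTwo (F : MvPowerSeries (Fin 2) R) (i j : ℕ) :
    coeff i (coeff j (curryFinTwo F)) =
      MvPowerSeries.coeff (Finsupp.cons j (Finsupp.single 0 i)) F := by
  have h := MvPowerSeries.coeff_embDomain_rename (Equiv.ofUnique (Fin 1) Unit).toEmbedding
    (coeff j (MvPowerSeries.finSuccEquiv R 1 F)) (Finsupp.single 0 i)
  rw [Finsupp.embDomain_single] at h
  rw [← MvPowerSeries.coeff_coeff_finSuccEquiv, ← h]
  rfl

end CommSemiring

variable {R : Type*} [CommRing R]

/-- `f(X) ↦ f(X + Y)`, with `Y` the outer variable. -/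
noncomputable def substAdd : R⟦X⟧ →+* R⟦X⟧⟦X⟧ :=
  curryFinTwo.comp (substAlgHom (HasSubst.of_constantCoeff_zero (a := MvPowerSeries.X 0 +
    MvPowerSeries.X 1) (by simp))).toRingHom

theorem coeff_coeff_substAdd (f : R⟦X⟧) (i j : ℕ) :
    coeff i (coeff j (substAdd f)) = (i + j).choose i * coeff (i + j) f := by
  rw [substAdd, RingHom.comp_apply, coeff_coeff_curryFinTwo, AlgHom.toRingHom_eq_coe,
    AlgHom.coe_toRingHom, coe_substAlgHom, coeff_subst_X_zero_add_X_one]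
  have hcons : (Finsupp.cons j (Finsupp.single 0 i) : Fin 2 →₀ ℕ) 1 = i :=
    (Finsupp.cons_succ 0 j _).trans Finsupp.single_eq_same
  rw [hcons, Finsupp.cons_zero, add_comm j i, Nat.choose_symm_add]

end PowerSeries

theorem coeff_coeff_map_comp_sub_substAdd_comp {L : Type*} [CommRing L] (θ : L →+* L⟦X⟧) (x : L)
    (i j : ℕ) :
    coeff i (coeff j (((map θ).comp θ) x - (substAdd.comp θ) x)) =
      hdCoeff θ i (hdCoeff θ j x) - (i + j).choose i * hdCoeff θ (i + j) x := by
  simp [coeff_map, coeff_coeff_substAdd, hdCoeff]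

theorem torsion_group_schemes_stmt_5_general {L : Type*} [Field L] (p : ℕ)
    (θ : L →+* PowerSeries L) (ℓ : ℕ) :
    (∃ K : Subfield L, (K : Set L) =
      {x : L | ∀ i j : ℕ, i + j < p ^ ℓ →
        hdCoeff θ i (hdCoeff θ j x) = ((i + j).choose i : L) * hdCoeff θ (i + j) x}) ∧
    (∃ K : Subfield L, (K : Set L) =
      {x : L | ∀ i j : ℕ,
        hdCoeff θ i (hdCoeff θ j x) = ((i + j).choose i : L) * hdCoeff θ (i + j) x}) := by
  have agree_mod (I : Ideal L⟦X⟧⟦X⟧) :=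
    ((map θ).comp θ).exists_subfield_coe_eq_setOf_sub_mem (substAdd.comp θ) I
  obtain ⟨K₁, hK₁⟩ := agree_mod (highTotalDegreeIdeal L (p ^ ℓ))
  obtain ⟨K₂, hK₂⟩ := agree_mod ⊥
  refine ⟨⟨K₁, hK₁.trans ?_⟩, ⟨K₂, hK₂.trans ?_⟩⟩ <;> ext x <;>
    simp only [Set.mem_ofPred_eq]
  · simp only [mem_highTotalDegreeIdeal, coeff_coeff_map_comp_sub_substAdd_comp, sub_eq_zero]
  · rw [Ideal.mem_bot, eq_zero_iff_forall_coeff_coeff_eq_zero]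
    simp only [coeff_coeff_map_comp_sub_substAdd_comp, sub_eq_zero]

/-- for a field `L` of prime characteristic `p` with a higher derivation `θ`
and `ℓ ∈ ℕ`, the set of `x ∈ L` such that
`θ^(i)(θ^(j)(x)) = binom(i+j,i)·θ^(i+j)(x)` for all `i + j < p^ℓ` is a subfield of `L`;
likewise for the set of `x` for which these identities hold for all `i, j ≥ 0`. -/
theorem torsion_group_schemes_stmt_5 {L : Type*} [Field L] (p : ℕ) [Fact p.Prime]
    [CharP L p] (θ : L →+* PowerSeries L) (hθ : IsHigherDerivation θ) (ℓ : ℕ) :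
    (∃ K : Subfield L, (K : Set L) =
      {x : L | ∀ i j : ℕ, i + j < p ^ ℓ →
        hdCoeff θ i (hdCoeff θ j x) = ((i + j).choose i : L) * hdCoeff θ (i + j) x}) ∧
    (∃ K : Subfield L, (K : Set L) =
      {x : L | ∀ i j : ℕ,
        hdCoeff θ i (hdCoeff θ j x) = ((i + j).choose i : L) * hdCoeff θ (i + j) x}) :=
  torsion_group_schemes_stmt_5_general p θ ℓ
end
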